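/- Let ζ be a primitive cube root of unity. The complex vector space of homogeneous polynomials f of degree 6 in ℂ[z₀,z₁,z₂] satisfying f(λz₀,λ²z₁,λ⁴z₂) = f(z₀,z₁,z₂) and f(z₂,z₀,z₁) = ζ·f(z₀,z₁,z₂) is one-dimensional, spanned by z₀⁵z₁ + ζ²·z₂⁵z₀ + ζ·z₁⁵z₂. -/

import Mathlib

open MvPolynomial

noncomputable def lam : ℂ := Complex.exp (2 * Real.pi * Complex.I / 7)

/-- The substitution `d : (z₀, z₁, z₂) ↦ (λz₀, λ²z₁, λ⁴z₂)` acting on polynomials. -/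
noncomputable def dSub : MvPolynomial (Fin 3) ℂ →ₐ[ℂ] MvPolynomial (Fin 3) ℂ :=
  aeval ![C lam * X 0, C (lam ^ 2) * X 1, C (lam ^ 4) * X 2]

/-- The cyclic substitution `τ : (z₀, z₁, z₂) ↦ (z₂, z₀, z₁)` acting on polynomials. -/
noncomputable def tauSub : MvPolynomial (Fin 3) ℂ →ₐ[ℂ] MvPolynomial (Fin 3) ℂ :=
  aeval ![X 2, X 0, X 1]

/-! The substitution `d` acts diagonally: it scales `z₀ᵃz₁ᵇz₂ᶜ` by `λ^(a+2b+4c)`, so a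
d-invariant sextic only involves exponents with `a + b + c = 6` and `7 ∣ a + 2b + 4c`, namely
`(5,1,0)`, `(0,5,1)`, `(1,0,5)` and `(2,2,2)`. The rotation `τ` permutes the first three
cyclically and fixes the last, so for `ζ ≠ 1` the coefficient of `z₀²z₁²z₂²` vanishes and the
coefficient of `z₀⁵z₁` determines the other two. -/

section
variable {R σ : Type*} [CommSemiring R]

theorem MvPolynomial.aeval_C_mul_X_monomial (w : σ → R) (s : σ →₀ ℕ) (a : R) :
    aeval (fun i => C (w i) * X i) (monomial s a) =
      monomial s ((s.prod fun i k => w i ^ k) * a) := by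
  rw [aeval_monomial, monomial_eq, algebraMap_eq]
  simp only [mul_pow, Finsupp.prod_mul, ← map_pow]
  rw [← map_finsuppProd, map_mul]
  ring

theorem MvPolynomial.coeff_aeval_C_mul_X (w : σ → R) (s : σ →₀ ℕ)
    (f : MvPolynomial σ R) :
    coeff s (aeval (fun i => C (w i) * X i) f) = (s.prod fun i k => w i ^ k) * coeff s f := by
  classical
  induction f using MvPolynomial.induction_on' with
  | monomial t a =>
    rw [aeval_C_mul_X_monomial, coeff_monomial, coeff_monomial]
    split_ifs with h
    · rw [h]
    · rw [mul_zero]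
  | add p q hp hq => rw [map_add, coeff_add, coeff_add, hp, hq, mul_add]

end

theorem sextic_exponents_of_seven_dvd (a b c : ℕ) (h6 : a + b + c = 6)
    (h7 : 7 ∣ a + 2 * b + 4 * c) :
    a = 5 ∧ b = 1 ∧ c = 0 ∨ a = 0 ∧ b = 5 ∧ c = 1 ∨ a = 1 ∧ b = 0 ∧ c = 5 ∨
      a = 2 ∧ b = 2 ∧ c = 2 := by
  have hc : c ≤ 6 := by omega
  interval_cases c <;> omega

theorem lam_isPrimitiveRoot : IsPrimitiveRoot lam 7 := by
  simpa [lam] using Complex.isPrimitiveRoot_exp 7 (by norm_num)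

noncomputable def exponent (a b c : ℕ) : Fin 3 →₀ ℕ :=
  Finsupp.equivFunOnFinite.symm ![a, b, c]

@[simp] theorem exponent_apply_zero (a b c : ℕ) : exponent a b c 0 = a := rfl
@[simp] theorem exponent_apply_one (a b c : ℕ) : exponent a b c 1 = b := rfl
@[simp] theorem exponent_apply_two (a b c : ℕ) : exponent a b c 2 = c := rfl

theorem exists_eq_exponent (m : Fin 3 →₀ ℕ) : ∃ a b c, m = exponent a b c :=
  ⟨m 0, m 1, m 2, by ext i; fin_cases i <;> rfl⟩

theorem exponent_inj {a b c a' b' c' : ℕ} :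
    exponent a b c = exponent a' b' c' ↔ a = a' ∧ b = b' ∧ c = c' := by
  simp [exponent, Finsupp.equivFunOnFinite.symm.injective.eq_iff]

theorem degree_exponent (a b c : ℕ) : (exponent a b c).degree = a + b + c := by
  simp [Finsupp.degree_eq_sum, Fin.sum_univ_three]

theorem cycle_injective : Function.Injective (![2, 0, 1] : Fin 3 → Fin 3) := by decide

theorem mapDomain_exponent (a b c : ℕ) :
    Finsupp.mapDomain ![2, 0, 1] (exponent a b c) = exponent b c a := by
  ext i
  fin_cases i
  exacts [Finsupp.mapDomain_apply cycle_injective _ 1,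
    Finsupp.mapDomain_apply cycle_injective _ 2, Finsupp.mapDomain_apply cycle_injective _ 0]

theorem dSub_eq_aeval : dSub = aeval fun i => C (lam ^ ![1, 2, 4] i) * X i := by
  rw [dSub]; congr 1; ext i; fin_cases i <;> simp

theorem coeff_exponent_dSub (a b c : ℕ) (f : MvPolynomial (Fin 3) ℂ) :
    coeff (exponent a b c) (dSub f) = lam ^ (a + 2 * b + 4 * c) * coeff (exponent a b c) f := by
  rw [dSub_eq_aeval, coeff_aeval_C_mul_X, Finsupp.prod_fintype _ _ (by simp),
    Fin.prod_univ_three]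
  simp [← pow_mul, ← pow_add, mul_comm]

theorem dSub_monomial_exponent (a b c : ℕ) (r : ℂ) :
    dSub (monomial (exponent a b c) r) =
      monomial (exponent a b c) (lam ^ (a + 2 * b + 4 * c) * r) := by
  rw [dSub_eq_aeval, aeval_C_mul_X_monomial, Finsupp.prod_fintype _ _ (by simp),
    Fin.prod_univ_three]
  simp [← pow_mul, ← pow_add, mul_comm]

theorem tauSub_eq_rename : tauSub = rename ![2, 0, 1] := by
  apply algHom_ext
  intro i
  fin_cases i <;> simp [tauSub]

theorem tauSub_monomial_exponent (a b c : ℕ) (r : ℂ) :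
    tauSub (monomial (exponent a b c) r) = monomial (exponent b c a) r := by
  rw [tauSub_eq_rename, rename_monomial, mapDomain_exponent]

theorem coeff_exponent_eq_mul_of_tauSub_eq {ζ : ℂ} {f : MvPolynomial (Fin 3) ℂ}
    (ht : tauSub f = C ζ * f) (a b c : ℕ) :
    coeff (exponent a b c) f = ζ * coeff (exponent b c a) f := by
  rw [← coeff_C_mul, ← ht, ← mapDomain_exponent a b c, tauSub_eq_rename,
    coeff_rename_mapDomain _ cycle_injective]

theorem seven_dvd_of_dSub_eq {f : MvPolynomial (Fin 3) ℂ} (hd : dSub f = f) {a b c : ℕ}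
    (h : coeff (exponent a b c) f ≠ 0) : 7 ∣ a + 2 * b + 4 * c := by
  rw [← lam_isPrimitiveRoot.pow_eq_one_iff_dvd]
  refine mul_right_cancel₀ h ?_
  rw [← coeff_exponent_dSub, hd, one_mul]

noncomputable def sexticEigenspace (ζ : ℂ) : Submodule ℂ (MvPolynomial (Fin 3) ℂ) where
  carrier := {f | f.IsHomogeneous 6 ∧ dSub f = f ∧ tauSub f = C ζ * f}
  add_mem' := fun ⟨hf, hdf, htf⟩ ⟨hg, hdg, htg⟩ =>
    ⟨hf.add hg, by rw [map_add, hdf, hdg], by rw [map_add, htf, htg, mul_add]⟩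
  zero_mem' := ⟨isHomogeneous_zero _ _ _, map_zero _, by rw [map_zero, mul_zero]⟩
  smul_mem' := fun c _ ⟨hf, hdf, htf⟩ =>
    ⟨(homogeneousSubmodule _ _ 6).smul_mem c hf, by rw [map_smul, hdf],
      by rw [map_smul, htf, mul_smul_comm]⟩

theorem eq_zero_of_mem_sexticEigenspace {ζ : ℂ} {f : MvPolynomial (Fin 3) ℂ}
    (hf : f ∈ sexticEigenspace ζ) (hζ : ζ ≠ 1) (h : coeff (exponent 5 1 0) f = 0) :
    f = 0 := by
  obtain ⟨hhom, hd, ht⟩ := hf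
  have hrot := coeff_exponent_eq_mul_of_tauSub_eq ht
  ext m
  obtain ⟨a, b, c, rfl⟩ := exists_eq_exponent m
  rw [coeff_zero]
  by_contra hm
  have h6 : a + b + c = 6 := by
    by_contra h6
    exact hm (hhom.coeff_eq_zero (by rwa [degree_exponent]))
  rcases sextic_exponents_of_seven_dvd a b c h6 (seven_dvd_of_dSub_eq hd hm) with
    ⟨rfl, rfl, rfl⟩ | ⟨rfl, rfl, rfl⟩ | ⟨rfl, rfl, rfl⟩ | ⟨rfl, rfl, rfl⟩
  · exact hm h
  · exact hm (by rw [hrot, h, mul_zero])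
  · exact hm (by rw [hrot, hrot, h, mul_zero, mul_zero])
  · exact hζ (mul_right_cancel₀ hm (by rw [← hrot, one_mul]))

noncomputable def sexticGenerator (ζ : ℂ) : MvPolynomial (Fin 3) ℂ :=
  monomial (exponent 5 1 0) 1 + monomial (exponent 0 5 1) ζ + monomial (exponent 1 0 5) (ζ ^ 2)

theorem sexticGenerator_eq (ζ : ℂ) : sexticGenerator ζ =
    X 0 ^ 5 * X 1 + C (ζ ^ 2) * (X 2 ^ 5 * X 0) + C ζ * (X 1 ^ 5 * X 2) := by
  simp [sexticGenerator, monomial_eq, Finsupp.prod_fintype, Fin.prod_univ_three]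
  ring

theorem coeff_sexticGenerator (ζ : ℂ) : coeff (exponent 5 1 0) (sexticGenerator ζ) = 1 := by
  simp [sexticGenerator, coeff_monomial, exponent_inj]

theorem sexticGenerator_mem {ζ : ℂ} (hζ : ζ ^ 3 = 1) :
    sexticGenerator ζ ∈ sexticEigenspace ζ := by
  refine ⟨?_, ?_, ?_⟩
  · refine ((isHomogeneous_monomial _ ?_).add (isHomogeneous_monomial _ ?_)).add
      (isHomogeneous_monomial _ ?_) <;> rw [degree_exponent]
  · have hlam : ∀ n, 7 ∣ n → lam ^ n = 1 :=
      fun n => (lam_isPrimitiveRoot.pow_eq_one_iff_dvd n).2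
    simp only [sexticGenerator, map_add, dSub_monomial_exponent]
    norm_num [hlam]
  · have hζζ : ζ * ζ ^ 2 = 1 := by rw [← pow_succ', hζ]
    simp only [sexticGenerator, map_add, tauSub_monomial_exponent, mul_add, C_mul_monomial,
      hζζ, mul_one, ← sq]
    abel

theorem sexticEigenspace_eq_span {ζ : ℂ} (hζ : IsPrimitiveRoot ζ 3) :
    sexticEigenspace ζ = Submodule.span ℂ {sexticGenerator ζ} := by
  have hgen := sexticGenerator_mem hζ.pow_eq_one
  refine le_antisymm (fun f hf => ?_) ((Submodule.span_singleton_le_iff_mem _ _).2 hgen)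
  refine Submodule.mem_span_singleton.2 ⟨coeff (exponent 5 1 0) f, (sub_eq_zero.1 ?_).symm⟩
  refine eq_zero_of_mem_sexticEigenspace (sub_mem hf (Submodule.smul_mem _ _ hgen))
    (hζ.ne_one (by norm_num)) ?_
  rw [coeff_sub, coeff_smul, coeff_sexticGenerator, smul_eq_mul, mul_one, sub_self]

/-- For a primitive cube root of unity ζ, the space of homogeneous degree-6 polynomials `f`
with `f ∘ d = f` and `f ∘ τ = ζ·f` is one-dimensional, spanned by
`z₀⁵z₁ + ζ²·z₂⁵z₀ + ζ·z₁⁵z₂`. -/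
theorem degree_six_H_eigenspace (ζ : ℂ) (hζ : IsPrimitiveRoot ζ 3) :
    {f : MvPolynomial (Fin 3) ℂ | f.IsHomogeneous 6 ∧ dSub f = f ∧ tauSub f = C ζ * f} =
      (Submodule.span ℂ
        ({X 0 ^ 5 * X 1 + C (ζ ^ 2) * (X 2 ^ 5 * X 0) + C ζ * (X 1 ^ 5 * X 2)} :
          Set (MvPolynomial (Fin 3) ℂ)) : Set (MvPolynomial (Fin 3) ℂ)) ∧
    (X 0 ^ 5 * X 1 + C (ζ ^ 2) * (X 2 ^ 5 * X 0) + C ζ * (X 1 ^ 5 * X 2) :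
      MvPolynomial (Fin 3) ℂ) ≠ 0 := by
  rw [← sexticGenerator_eq, ← sexticEigenspace_eq_span hζ]
  refine ⟨rfl, fun h => ?_⟩
  simpa [h] using coeff_sexticGenerator ζ
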